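/- Let M = (W, ≤, N, V) be an N-model for the language L, and define N* on arbitrary subsets of W by N*(X) = {w ∈ W : there exists an upward-closed Y ⊆ W with X ∩ R(w) = Y ∩ R(w) and w ∈ N(Y)}. Then (W, ≤, N*) is an N-frame for NS4, and for every L-formula φ and every w ∈ W: M, w ⊨ φ (in the N-semantics) if and only if (W, ≤, N*, V), w ⊨ φ^□ (in the NS4 semantics). -/

import Mathlib

inductive Form : Type
  | var : ℕ → Form
  | top : Form
  | and : Form → Form → Form
  | or : Form → Form → Form
  | imp : Form → Form → Form
  | neg : Form → Form

def IsUpset {W : Type*} (le : W → W → Prop) (X : Set W) : Prop :=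
  ∀ ⦃w v : W⦄, le w v → w ∈ X → v ∈ X

def Sat {W : Type*} (le : W → W → Prop) (N : Set W → Set W) (V : ℕ → Set W) : Form → Set W
  | .var p => V p
  | .top => Set.univ
  | .and φ ψ => Sat le N V φ ∩ Sat le N V ψ
  | .or φ ψ => Sat le N V φ ∪ Sat le N V ψ
  | .imp φ ψ => {w | ∀ v, le w v → v ∈ Sat le N V φ → v ∈ Sat le N V ψ}
  | .neg φ => N (Sat le N V φ)

def ValidOn {W : Type*} (le : W → W → Prop) (N : Set W → Set W) (φ : Form) : Prop :=
  ∀ V : ℕ → Set W, (∀ p, IsUpset le (V p)) → ∀ w, w ∈ Sat le N V φ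

inductive MForm : Type
  | var : ℕ → MForm
  | bot : MForm
  | top : MForm
  | and : MForm → MForm → MForm
  | or : MForm → MForm → MForm
  | imp : MForm → MForm → MForm
  | box : MForm → MForm
  | bbox : MForm → MForm

def MForm.miff (φ ψ : MForm) : MForm := (φ.imp ψ).and (ψ.imp φ)

def MTaut (φ : MForm) : Prop :=
  ∀ v : MForm → Bool,
    v MForm.bot = false → v MForm.top = true →
    (∀ a b : MForm, v (a.and b) = (v a && v b)) →
    (∀ a b : MForm, v (a.or b) = (v a || v b)) →
    (∀ a b : MForm, v (a.imp b) = (!(v a) || v b)) →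
    v φ = true

inductive NS4 : MForm → Prop
  | taut : ∀ {φ : MForm}, MTaut φ → NS4 φ
  | axK : ∀ φ ψ : MForm, NS4 (((φ.imp ψ).box).imp ((φ.box).imp (ψ.box)))
  | axT : ∀ φ : MForm, NS4 ((φ.box).imp φ)
  | ax4 : ∀ φ : MForm, NS4 ((φ.box).imp (φ.box.box))
  | axN : ∀ φ ψ : MForm, NS4 (((φ.miff ψ).box).imp ((φ.bbox).miff (ψ.bbox)))
  | axB : ∀ φ : MForm, NS4 ((φ.bbox).imp (φ.bbox.box))
  | mp : ∀ {φ ψ : MForm}, NS4 (φ.imp ψ) → NS4 φ → NS4 ψ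
  | nec : ∀ {φ : MForm}, NS4 φ → NS4 (φ.box)

def MSat {W : Type*} (le : W → W → Prop) (N : Set W → Set W) (V : ℕ → Set W) : MForm → Set W
  | .var p => V p
  | .bot => ∅
  | .top => Set.univ
  | .and φ ψ => MSat le N V φ ∩ MSat le N V ψ
  | .or φ ψ => MSat le N V φ ∪ MSat le N V ψ
  | .imp φ ψ => {w | w ∈ MSat le N V φ → w ∈ MSat le N V ψ}
  | .box φ => {w | ∀ v, le w v → v ∈ MSat le N V φ}
  | .bbox φ => N (MSat le N V φ)

def godelT : Form → MForm
  | .var p => (MForm.var p).box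
  | .top => MForm.top
  | .and φ ψ => (godelT φ).and (godelT ψ)
  | .or φ ψ => (godelT φ).or (godelT ψ)
  | .imp φ ψ => ((godelT φ).imp (godelT ψ)).box
  | .neg φ => (godelT φ).bbox

/-- The NS4 neighbourhood function induced by an N-frame. -/
def NStar {W : Type*} (le : W → W → Prop) (N : Set W → Set W) : Set W → Set W :=
  fun X => {w | ∃ Y : Set W, IsUpset le Y ∧ X ∩ {v | le w v} = Y ∩ {v | le w v} ∧ w ∈ N Y}

/-!
Truth sets of the N-semantics are upsets, and on upsets `N*` agrees with `N`: if upsets `X` and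
`Y` agree on `R(w)`, locality gives `N(X) ∩ R(w) = N(Y) ∩ R(w)`, and `w ∈ R(w)` by reflexivity.
The Gödel translation then preserves truth by induction on the formula, the `□` in front of
variables and implications being absorbed by persistence.
-/

section NStar

variable {W : Type*} {le : W → W → Prop} {N : Set W → Set W}

lemma isUpset_setOf_le (htrans : ∀ a b c, le a b → le b c → le a c) (w : W) :
    IsUpset le {v | le w v} :=
  fun _ _ hab ha => htrans _ _ _ ha hab

lemma isUpset_sat (htrans : ∀ a b c, le a b → le b c → le a c)
    (hNup : ∀ X, IsUpset le X → IsUpset le (N X))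
    {V : ℕ → Set W} (hV : ∀ p, IsUpset le (V p)) (φ : Form) :
    IsUpset le (Sat le N V φ) := by
  induction φ with
  | var p => exact hV p
  | top => exact fun _ _ _ _ => trivial
  | and φ ψ ihφ ihψ => exact fun _ _ h hw => ⟨ihφ h hw.1, ihψ h hw.2⟩
  | or φ ψ ihφ ihψ => exact fun _ _ h hw => hw.imp (ihφ h) (ihψ h)
  | imp φ ψ _ _ => exact fun _ _ h hw u hvu hu => hw u (htrans _ _ _ h hvu) hu
  | neg φ ih => exact hNup _ ih

lemma isUpset_nStar (htrans : ∀ a b c, le a b → le b c → le a c)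
    (hNup : ∀ X, IsUpset le X → IsUpset le (N X)) (X : Set W) :
    IsUpset le (NStar le N X) := by
  rintro w v hwv ⟨Y, hY, hXY, hwY⟩
  refine ⟨Y, hY, ?_, hNup Y hY hwv hwY⟩
  have hsub : {x | le v x} ⊆ {x | le w x} := fun _ hvu => htrans _ _ _ hwv hvu
  calc X ∩ {x | le v x} = X ∩ ({x | le w x} ∩ {x | le v x}) := by
        rw [Set.inter_eq_right.mpr hsub]
    _ = Y ∩ ({x | le w x} ∩ {x | le v x}) := by rw [← Set.inter_assoc, hXY, Set.inter_assoc]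
    _ = Y ∩ {x | le v x} := by rw [Set.inter_eq_right.mpr hsub]

lemma mem_nStar_iff_mem_nStar_inter (w : W) (X : Set W) :
    w ∈ NStar le N X ↔ w ∈ NStar le N (X ∩ {v | le w v}) := by
  simp only [NStar, Set.mem_ofPred_eq, Set.inter_assoc, Set.inter_self]

lemma mem_nStar_iff_of_isUpset (hrefl : ∀ w, le w w)
    (htrans : ∀ a b c, le a b → le b c → le a c)
    (hNloc : ∀ X Y, IsUpset le X → IsUpset le Y → N X ∩ Y = N (X ∩ Y) ∩ Y)
    {X : Set W} (hX : IsUpset le X) (w : W) :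
    w ∈ NStar le N X ↔ w ∈ N X := by
  refine ⟨?_, fun hw => ⟨X, hX, rfl, hw⟩⟩
  rintro ⟨Y, hY, hXY, hwY⟩
  have hR := isUpset_setOf_le htrans w
  have hloc : N Y ∩ {v | le w v} = N X ∩ {v | le w v} := by
    rw [hNloc Y _ hY hR, hNloc X _ hX hR, hXY]
  exact (hloc ▸ ⟨hwY, hrefl w⟩ : w ∈ N X ∩ {v | le w v}).1

lemma sat_eq_mSat_godelT (hrefl : ∀ w, le w w)
    (htrans : ∀ a b c, le a b → le b c → le a c)
    (hNup : ∀ X, IsUpset le X → IsUpset le (N X))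
    (hNloc : ∀ X Y, IsUpset le X → IsUpset le Y → N X ∩ Y = N (X ∩ Y) ∩ Y)
    {V : ℕ → Set W} (hV : ∀ p, IsUpset le (V p)) (φ : Form) :
    Sat le N V φ = MSat le (NStar le N) V (godelT φ) := by
  induction φ with
  | var p =>
    ext w
    exact ⟨fun hw _ hwv => hV p hwv hw, fun hw => hw w (hrefl w)⟩
  | top => rfl
  | and φ ψ ihφ ihψ => simp only [Sat, MSat, godelT, ihφ, ihψ]
  | or φ ψ ihφ ihψ => simp only [Sat, MSat, godelT, ihφ, ihψ]
  | imp φ ψ ihφ ihψ => simp only [Sat, MSat, godelT, ihφ, ihψ, Set.mem_ofPred_eq]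
  | neg φ ih =>
    ext w
    simp only [Sat, MSat, godelT, ← ih]
    exact (mem_nStar_iff_of_isUpset hrefl htrans hNloc (isUpset_sat htrans hNup hV φ) w).symm

end NStar

theorem stmt13_general {W : Type*} (le : W → W → Prop)
    (hrefl : ∀ w, le w w)
    (htrans : ∀ a b c, le a b → le b c → le a c)
    (N : Set W → Set W)
    (hNup : ∀ X, IsUpset le X → IsUpset le (N X))
    (hNloc : ∀ X Y, IsUpset le X → IsUpset le Y → N X ∩ Y = N (X ∩ Y) ∩ Y)
    (V : ℕ → Set W) (hV : ∀ p, IsUpset le (V p)) :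
    (∀ X : Set W, IsUpset le (NStar le N X)) ∧
    (∀ (w : W) (X : Set W),
        w ∈ NStar le N X ↔ w ∈ NStar le N (X ∩ {v | le w v})) ∧
    (∀ (φ : Form) (w : W),
        w ∈ Sat le N V φ ↔ w ∈ MSat le (NStar le N) V (godelT φ)) :=
  ⟨isUpset_nStar htrans hNup, mem_nStar_iff_mem_nStar_inter,
    fun φ w => by rw [sat_eq_mSat_godelT hrefl htrans hNup hNloc hV φ]⟩

/-- Every N-model induces an NS4 N-model which is equivalent along the Gödel
translation. -/
theorem stmt13 {W : Type*} (le : W → W → Prop)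
    (hrefl : ∀ w, le w w)
    (htrans : ∀ a b c, le a b → le b c → le a c)
    (hanti : ∀ a b, le a b → le b a → a = b)
    (N : Set W → Set W)
    (hNup : ∀ X, IsUpset le X → IsUpset le (N X))
    (hNloc : ∀ X Y, IsUpset le X → IsUpset le Y → N X ∩ Y = N (X ∩ Y) ∩ Y)
    (V : ℕ → Set W) (hV : ∀ p, IsUpset le (V p)) :
    (∀ X : Set W, IsUpset le (NStar le N X)) ∧
    (∀ (w : W) (X : Set W),
        w ∈ NStar le N X ↔ w ∈ NStar le N (X ∩ {v | le w v})) ∧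
    (∀ (φ : Form) (w : W),
        w ∈ Sat le N V φ ↔ w ∈ MSat le (NStar le N) V (godelT φ)) :=
  stmt13_general le hrefl htrans N hNup hNloc V hV
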